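/- Let x,y ∈ ℝ^d with x ≠ y and let f be a 1-field with dom(f) = {x,y}. Then there exists a point c ∈ B̄_{1/2}(x,y), depending only on f, such that every 1-field extension F of f with B̄_{1/2}(x,y) ⊂ dom(F) satisfies Γ¹(F;x,y) ≤ max{Γ¹(F;x,a), Γ¹(F;a,y)} for all a ∈ ([x,c] ∪ [c,y]) ∖ {x,y}. -/

import Mathlib

open scoped ENNReal RealInnerProductSpace
open Metric Set

/-- A 1-field assigns to each point `x` the pair `(f_x, D_xf)` representing the affine
polynomial `a ↦ f_x + ⟪D_xf, a - x⟫`; `eval1 f x a` is the evaluation `f(x)(a)`. -/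
noncomputable def eval1 {d : ℕ} (f : EuclideanSpace ℝ (Fin d) → ℝ × EuclideanSpace ℝ (Fin d))
    (x a : EuclideanSpace ℝ (Fin d)) : ℝ :=
  (f x).1 + ⟪(f x).2, a - x⟫

/-- `Γ¹(f;x,y) = 2 sup_a |f(x)(a) - f(y)(a)| / (‖x-a‖² + ‖y-a‖²)`. -/
noncomputable def gamma1 {d : ℕ} (f : EuclideanSpace ℝ (Fin d) → ℝ × EuclideanSpace ℝ (Fin d))
    (x y : EuclideanSpace ℝ (Fin d)) : ℝ :=
  2 * ⨆ a : EuclideanSpace ℝ (Fin d),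
    |eval1 f x a - eval1 f y a| / (‖x - a‖ ^ 2 + ‖y - a‖ ^ 2)

/-- `Γ¹(f;D) = sup {Γ¹(f;x,y) : x,y ∈ D, x ≠ y}`, valued in `[0,∞]`. -/
noncomputable def gamma1On {d : ℕ} (f : EuclideanSpace ℝ (Fin d) → ℝ × EuclideanSpace ℝ (Fin d))
    (D : Set (EuclideanSpace ℝ (Fin d))) : ℝ≥0∞ :=
  ⨆ x ∈ D, ⨆ y ∈ D, ⨆ (_ : x ≠ y), ENNReal.ofReal (gamma1 f x y)

/-- `A(f;x,y) = (2(f_x - f_y) + ⟪D_xf + D_yf, y - x⟫) / ‖x-y‖²`. -/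
noncomputable def Afun {d : ℕ} (f : EuclideanSpace ℝ (Fin d) → ℝ × EuclideanSpace ℝ (Fin d))
    (x y : EuclideanSpace ℝ (Fin d)) : ℝ :=
  (2 * ((f x).1 - (f y).1) + ⟪(f x).2 + (f y).2, y - x⟫) / ‖x - y‖ ^ 2

section ChaslesAux

variable {d : ℕ}

lemma gamma1_nonneg (F : EuclideanSpace ℝ (Fin d) → ℝ × EuclideanSpace ℝ (Fin d))
    (x y : EuclideanSpace ℝ (Fin d)) : 0 ≤ gamma1 F x y := by
  have : (0:ℝ) ≤ ⨆ a : EuclideanSpace ℝ (Fin d),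
      |eval1 F x a - eval1 F y a| / (‖x - a‖ ^ 2 + ‖y - a‖ ^ 2) :=
    Real.iSup_nonneg fun a => by positivity
  unfold gamma1; linarith

lemma gamma1_comm (F : EuclideanSpace ℝ (Fin d) → ℝ × EuclideanSpace ℝ (Fin d))
    (x y : EuclideanSpace ℝ (Fin d)) : gamma1 F x y = gamma1 F y x := by
  unfold gamma1
  congr 1
  congr 1
  funext a
  rw [abs_sub_comm, add_comm]

lemma denom_pos {x a : EuclideanSpace ℝ (Fin d)} (h : x ≠ a) (p : EuclideanSpace ℝ (Fin d)) :
    0 < ‖x - p‖ ^ 2 + ‖a - p‖ ^ 2 := by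
  rcases eq_or_ne x p with rfl | hxp
  · have h2 : 0 < ‖a - x‖ := by
      rw [norm_pos_iff, sub_ne_zero]; exact fun hh => h hh.symm
    nlinarith [sq_nonneg ‖x - x‖]
  · have h2 : 0 < ‖x - p‖ := by rw [norm_pos_iff, sub_ne_zero]; exact hxp
    nlinarith [sq_nonneg ‖a - p‖]

/-- decomposition of the difference of two affine evaluations around the midpoint -/
lemma delta_decomp (F : EuclideanSpace ℝ (Fin d) → ℝ × EuclideanSpace ℝ (Fin d))
    (x a p : EuclideanSpace ℝ (Fin d)) :
    eval1 F x p - eval1 F a p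
      = (2*((F x).1 - (F a).1) + ⟪(F x).2 + (F a).2, a - x⟫)/2
        + ⟪(F x).2 - (F a).2, p - (1/2 : ℝ) • (x + a)⟫ := by
  unfold eval1
  simp only [inner_sub_left, inner_sub_right, inner_add_left, inner_add_right,
    real_inner_smul_right]
  ring_nf
  try simp only [real_inner_comm]
  try ring

lemma denom_decomp (x a p : EuclideanSpace ℝ (Fin d)) :
    ‖x - p‖ ^ 2 + ‖a - p‖ ^ 2
      = ‖x - a‖ ^ 2 / 2 + 2 * ‖p - (1/2 : ℝ) • (x + a)‖ ^ 2 := by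
  simp only [← real_inner_self_eq_norm_sq, inner_sub_left, inner_sub_right, inner_add_left,
    inner_add_right, real_inner_smul_left, real_inner_smul_right]
  ring_nf
  try simp only [real_inner_comm]
  try ring

lemma delta_grad (F : EuclideanSpace ℝ (Fin d) → ℝ × EuclideanSpace ℝ (Fin d))
    (x a p : EuclideanSpace ℝ (Fin d)) :
    eval1 F x p - eval1 F a p
      = (eval1 F x x - eval1 F a x) + ⟪(F x).2 - (F a).2, p - x⟫ := by
  unfold eval1
  simp only [inner_sub_left, inner_sub_right]
  ring

lemma gamma1_bdd (F : EuclideanSpace ℝ (Fin d) → ℝ × EuclideanSpace ℝ (Fin d))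
    {x y : EuclideanSpace ℝ (Fin d)} (hxy : x ≠ y) :
    BddAbove (Set.range fun p : EuclideanSpace ℝ (Fin d) =>
      |eval1 F x p - eval1 F y p| / (‖x - p‖ ^ 2 + ‖y - p‖ ^ 2)) := by
  have hd : 0 < ‖x - y‖ := by rw [norm_pos_iff, sub_ne_zero]; exact hxy
  set dd := ‖x - y‖ with hdd
  set Dx := |eval1 F x x - eval1 F y x| with hDx
  set N := ‖(F x).2 - (F y).2‖ with hN
  refine ⟨2*Dx/dd^2 + 2*N/dd, ?_⟩
  rintro _ ⟨p, rfl⟩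
  have hden := denom_pos hxy p
  rw [div_le_iff₀ hden]
  set s := ‖x - p‖ with hs
  set t := ‖y - p‖ with ht
  have hs0 : 0 ≤ s := norm_nonneg _
  have ht0 : 0 ≤ t := norm_nonneg _
  have htri : dd ≤ s + t := by
    calc dd = ‖(x - p) + (p - y)‖ := by rw [hdd]; congr 1; abel
    _ ≤ ‖x - p‖ + ‖p - y‖ := norm_add_le _ _
    _ = s + t := by rw [norm_sub_rev p y]
  have hnum : |eval1 F x p - eval1 F y p| ≤ Dx + N * s := by
    rw [delta_grad F x y p]
    refine (abs_add_le _ _).trans ?_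
    have : |⟪(F x).2 - (F y).2, p - x⟫| ≤ N * ‖p - x‖ := abs_real_inner_le_norm _ _
    rw [norm_sub_rev p x] at this
    linarith
  refine hnum.trans ?_
  have hDx0 : 0 ≤ Dx := abs_nonneg _
  have hN0 : 0 ≤ N := norm_nonneg _
  have h1 : dd^2 ≤ 2*s^2 + 2*t^2 := by nlinarith [sq_nonneg (s - t), sq_nonneg (s + t - dd)]
  have h2 : dd*s ≤ 2*s^2 + 2*t^2 := by
    nlinarith [sq_nonneg (s - t), mul_nonneg hs0 ht0, mul_le_mul_of_nonneg_right htri hs0]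
  have e : (2*Dx/dd^2 + 2*N/dd) * (s^2 + t^2)
      = (Dx * (2*s^2+2*t^2))/dd^2 + (N * (2*s^2+2*t^2))/dd := by ring
  rw [e]
  have g1 : Dx ≤ (Dx * (2*s^2+2*t^2))/dd^2 := by
    rw [le_div_iff₀ (by positivity)]
    nlinarith [mul_le_mul_of_nonneg_left h1 hDx0]
  have g2 : N * s ≤ (N * (2*s^2+2*t^2))/dd := by
    rw [le_div_iff₀ hd]
    nlinarith [mul_le_mul_of_nonneg_left h2 hN0]
  linarith

lemma gamma1_pointwise (F : EuclideanSpace ℝ (Fin d) → ℝ × EuclideanSpace ℝ (Fin d))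
    {x a : EuclideanSpace ℝ (Fin d)} (hxa : x ≠ a) (p : EuclideanSpace ℝ (Fin d)) :
    2 * |eval1 F x p - eval1 F a p| ≤ gamma1 F x a * (‖x - p‖ ^ 2 + ‖a - p‖ ^ 2) := by
  have hb := gamma1_bdd F hxa
  have hle : |eval1 F x p - eval1 F a p| / (‖x - p‖ ^ 2 + ‖a - p‖ ^ 2)
      ≤ ⨆ q : EuclideanSpace ℝ (Fin d),
        |eval1 F x q - eval1 F a q| / (‖x - q‖ ^ 2 + ‖a - q‖ ^ 2) :=
    le_ciSup hb p
  have hden := denom_pos hxa p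
  rw [div_le_iff₀ hden] at hle
  unfold gamma1
  nlinarith [hle]

lemma Dscalar {S L D K M : ℝ} (hS0 : 0 ≤ S) (hD : 0 < D) (hK : 0 < K) (hM : K < M)
    (bp : S + 2*K*L ≤ K^2*D) (bm : S - 2*K*L ≤ K^2*D) :
    S + 2*M*|L| < M^2*D := by
  have hM0 : 0 < M := hK.trans hM
  rcases abs_cases L with ⟨he, hsgn⟩ | ⟨he, hsgn⟩
  · rw [he]
    have h2L : 2*L ≤ K*D := by nlinarith
    have p1 := mul_le_mul_of_nonneg_left h2L (le_of_lt (sub_pos.mpr hM))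
    have p2 : K*(M*D) < M*(M*D) := mul_lt_mul_of_pos_right hM (mul_pos hM0 hD)
    nlinarith
  · rw [he]
    have h2L : 2*(-L) ≤ K*D := by nlinarith
    have p1 := mul_le_mul_of_nonneg_left h2L (le_of_lt (sub_pos.mpr hM))
    have p2 : K*(M*D) < M*(M*D) := mul_lt_mul_of_pos_right hM (mul_pos hM0 hD)
    nlinarith

lemma Dlem (F : EuclideanSpace ℝ (Fin d) → ℝ × EuclideanSpace ℝ (Fin d))
    {x a : EuclideanSpace ℝ (Fin d)} (hxa : x ≠ a) {M : ℝ} (hM : gamma1 F x a < M) :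
    ‖(F x).2 - (F a).2‖ ^ 2
      + 2*M*|2*((F x).1 - (F a).1) + ⟪(F x).2 + (F a).2, a - x⟫| < M^2 * ‖x - a‖^2 := by
  have hK0 : 0 ≤ gamma1 F x a := gamma1_nonneg F x a
  have heval0 : ∀ z : EuclideanSpace ℝ (Fin d),
      2 * |(2*((F x).1 - (F a).1) + ⟪(F x).2 + (F a).2, a - x⟫)/2 + ⟪(F x).2 - (F a).2, z⟫|
        ≤ gamma1 F x a * (‖x - a‖^2/2 + 2*‖z‖^2) := by
    intro z
    have h := gamma1_pointwise F hxa ((1/2 : ℝ) • (x + a) + z)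
    rw [delta_decomp F x a, denom_decomp x a] at h
    simpa [add_sub_cancel_left] using h
  set K := gamma1 F x a with hKdef
  clear_value K
  generalize hu : (F x).2 = u at heval0 ⊢
  generalize hw : (F a).2 = w at heval0 ⊢
  generalize hfx : (F x).1 = fx at heval0 ⊢
  generalize hg : (F a).1 = g at heval0 ⊢
  set S := ‖u - w‖ ^ 2 with hSdef
  set L := 2*(fx - g) + ⟪u + w, a - x⟫ with hLdef
  set D := ‖x - a‖ ^ 2 with hDdef
  have hD : 0 < D := by
    have : 0 < ‖x - a‖ := by rw [norm_pos_iff, sub_ne_zero]; exact hxa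
    positivity
  have hS0 : 0 ≤ S := sq_nonneg _
  have hM0 : 0 < M := lt_of_le_of_lt hK0 hM
  have heval : ∀ z : EuclideanSpace ℝ (Fin d),
      2 * |L/2 + ⟪u - w, z⟫| ≤ K * (D/2 + 2*‖z‖^2) := heval0
  rcases eq_or_lt_of_le hK0 with hK | hK
  · -- K = 0
    have hzero : ∀ z : EuclideanSpace ℝ (Fin d), L/2 + ⟪u - w, z⟫ = 0 := by
      intro z
      have h := heval z
      rw [← hK] at h
      have h0 := abs_nonneg (L/2 + ⟪u - w, z⟫)
      have h2 : |L/2 + ⟪u - w, z⟫| = 0 := by linarith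
      exact abs_eq_zero.mp h2
    have hL : L = 0 := by have := hzero 0; simpa using this
    have hSz : S = 0 := by
      have h := hzero (u - w)
      rw [real_inner_self_eq_norm_sq] at h
      rw [hSdef]; linarith
    rw [hSz, hL, abs_zero]
    nlinarith [mul_pos (mul_pos hM0 hM0) hD]
  · -- K > 0
    have hplus := heval ((1/(2*K)) • (u - w))
    have hminus := heval ((-(1/(2*K))) • (u - w))
    rw [real_inner_smul_right, real_inner_self_eq_norm_sq, norm_smul, Real.norm_eq_abs,
      abs_of_pos (show (0:ℝ) < 1/(2*K) by positivity)] at hplus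
    rw [real_inner_smul_right, real_inner_self_eq_norm_sq, norm_smul, Real.norm_eq_abs,
      abs_neg, abs_of_pos (show (0:ℝ) < 1/(2*K) by positivity)] at hminus
    have hKne : (K:ℝ) ≠ 0 := ne_of_gt hK
    have expand : K * (D/2 + 2*(1/(2*K)*‖u - w‖)^2) = K*D/2 + S/(2*K) := by
      rw [hSdef]; field_simp
    rw [expand] at hplus hminus
    rw [← hSdef] at hplus hminus
    clear_value S L D
    have bp : S + 2*K*L ≤ K^2*D := by
      have h1 : L/2 + 1/(2*K)*S ≤ |L/2 + 1/(2*K)*S| := le_abs_self _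
      have h3 : 2*(L/2 + 1/(2*K)*S) ≤ K*D/2 + S/(2*K) := by linarith
      have h4 := mul_le_mul_of_nonneg_left h3 (le_of_lt hK)
      have e1 : K * (2*(L/2 + 1/(2*K)*S)) = K*L + S := by field_simp
      have e2 : K * (K*D/2 + S/(2*K)) = K^2*D/2 + S/2 := by field_simp
      rw [e1, e2] at h4
      linarith
    have bm : S - 2*K*L ≤ K^2*D := by
      have h1 : -(L/2 + (-(1/(2*K)))*S) ≤ |L/2 + (-(1/(2*K)))*S| := neg_le_abs _
      have h3 : 2*(-(L/2) + 1/(2*K)*S) ≤ K*D/2 + S/(2*K) := by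
        have e : -(L/2 + (-(1/(2*K)))*S) = -(L/2) + 1/(2*K)*S := by ring
        rw [e] at h1
        linarith
      have h4 := mul_le_mul_of_nonneg_left h3 (le_of_lt hK)
      have e1 : K * (2*(-(L/2) + 1/(2*K)*S)) = -(K*L) + S := by field_simp
      have e2 : K * (K*D/2 + S/(2*K)) = K^2*D/2 + S/2 := by field_simp
      rw [e1, e2] at h4
      linarith
    exact Dscalar hS0 hD hK hM bp bm

set_option maxHeartbeats 1000000 in
/-- The fundamental algebraic identity behind the Chasles property. -/
lemma keyid (x y c a u v w : EuclideanSpace ℝ (Fin d)) (fx fy g M t : ℝ)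
    (hv : v = u - (2*M) • (c - (1/2 : ℝ) • (x + y)))
    (ha : a = x + t • (c - x)) :
    (‖u - w‖^2 + 2*M*(2*(fx - g) + ⟪u + w, a - x⟫))
      + (1 - t)*(‖u - w‖^2 - 2*M*(2*(fx - g) + ⟪u + w, a - x⟫))
      + t*(‖w - v‖^2 + 2*M*(2*(g - fy) + ⟪w + v, y - a⟫))
      + t*(M^2*‖x - y‖^2 - ‖u - v‖^2 - 2*M*(2*(fx - fy) + ⟪u + v, y - x⟫))
    = M^2*((2 - t)*‖x - a‖^2 + t*‖a - y‖^2)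
      + 2*‖w - u + t • ((1/2 : ℝ) • (u - v) + (M/2) • (y - x))‖^2 := by
  subst hv ha
  simp only [← real_inner_self_eq_norm_sq, inner_sub_left, inner_sub_right, inner_add_left,
    inner_add_right, real_inner_smul_left, real_inner_smul_right]
  ring_nf
  try simp only [real_inner_comm]
  try ring

/-- Core contradiction lemma for the Chasles property, `σ = 1` version. -/
lemma core1 (x y c a u v w : EuclideanSpace ℝ (Fin d)) (fx fy g M t : ℝ)
    (hM : 0 < M) (ht0 : 0 < t) (ht1 : t ≤ 1)
    (hv : v = u - (2*M) • (c - (1/2 : ℝ) • (x + y)))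
    (ha : a = x + t • (c - x))
    (hres : M^2*‖x - y‖^2 = ‖u - v‖^2 + 2*M*(2*(fx - fy) + ⟪u + v, y - x⟫))
    (h1 : ‖u - w‖^2 + 2*M*|2*(fx - g) + ⟪u + w, a - x⟫| < M^2*‖x - a‖^2)
    (h2 : ‖w - v‖^2 + 2*M*|2*(g - fy) + ⟪w + v, y - a⟫| < M^2*‖a - y‖^2) : False := by
  have key := keyid x y c a u v w fx fy g M t hv ha
  have hR : 0 ≤ 2*‖w - u + t • ((1/2 : ℝ) • (u - v) + (M/2) • (y - x))‖^2 := by positivity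
  have hM' : 0 ≤ 2*M := by linarith
  have a1 : 2*M*(2*(fx - g) + ⟪u + w, a - x⟫) ≤ 2*M*|2*(fx - g) + ⟪u + w, a - x⟫| :=
    mul_le_mul_of_nonneg_left (le_abs_self _) hM'
  have a2 : -(2*M*|2*(fx - g) + ⟪u + w, a - x⟫|) ≤ 2*M*(2*(fx - g) + ⟪u + w, a - x⟫) := by
    have := mul_le_mul_of_nonneg_left (neg_abs_le (2*(fx - g) + ⟪u + w, a - x⟫)) hM'
    linarith [this]
  have a3 : 2*M*(2*(g - fy) + ⟪w + v, y - a⟫) ≤ 2*M*|2*(g - fy) + ⟪w + v, y - a⟫| :=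
    mul_le_mul_of_nonneg_left (le_abs_self _) hM'
  have e1 : ‖u - w‖^2 + 2*M*(2*(fx - g) + ⟪u + w, a - x⟫) < M^2*‖x - a‖^2 := by linarith
  have e2 : ‖u - w‖^2 - 2*M*(2*(fx - g) + ⟪u + w, a - x⟫) < M^2*‖x - a‖^2 := by linarith
  have e3 : ‖w - v‖^2 + 2*M*(2*(g - fy) + ⟪w + v, y - a⟫) < M^2*‖a - y‖^2 := by linarith
  have c2 := mul_le_mul_of_nonneg_left e2.le (by linarith : (0:ℝ) ≤ 1 - t)
  have c3 := mul_le_mul_of_nonneg_left e3.le ht0.le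
  nlinarith [key, e1, c2, c3, hR]

/-- Core contradiction lemma, `σ = -1` version. -/
lemma core1' (x y c a u v w : EuclideanSpace ℝ (Fin d)) (fx fy g M t : ℝ)
    (hM : 0 < M) (ht0 : 0 < t) (ht1 : t ≤ 1)
    (hv : v = u + (2*M) • (c - (1/2 : ℝ) • (x + y)))
    (ha : a = x + t • (c - x))
    (hres : M^2*‖x - y‖^2 = ‖u - v‖^2 - 2*M*(2*(fx - fy) + ⟪u + v, y - x⟫))
    (h1 : ‖u - w‖^2 + 2*M*|2*(fx - g) + ⟪u + w, a - x⟫| < M^2*‖x - a‖^2)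
    (h2 : ‖w - v‖^2 + 2*M*|2*(g - fy) + ⟪w + v, y - a⟫| < M^2*‖a - y‖^2) : False := by
  apply core1 x y c a (-u) (-v) (-w) (-fx) (-fy) (-g) M t hM ht0 ht1 ?_ ha ?_ ?_ ?_
  · rw [hv]; module
  · have e1 : -u - -v = -(u - v) := by module
    have e2 : -u + -v = -(u + v) := by module
    rw [e1, e2, norm_neg, inner_neg_left]
    linear_combination hres
  · have e3 : -u - -w = -(u - w) := by module
    have e4 : 2*(-fx - -g) + ⟪-u + -w, a - x⟫ = -(2*(fx - g) + ⟪u + w, a - x⟫) := by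
      rw [show -u + -w = -(u + w) by module, inner_neg_left]; ring
    rw [e3, e4, norm_neg, abs_neg]
    exact h1
  · have e5 : -w - -v = -(w - v) := by module
    have e6 : 2*(-g - -fy) + ⟪-w + -v, y - a⟫ = -(2*(g - fy) + ⟪w + v, y - a⟫) := by
      rw [show -w + -v = -(w + v) by module, inner_neg_left]; ring
    rw [e5, e6, norm_neg, abs_neg]
    exact h2

lemma gamma1_upper (F : EuclideanSpace ℝ (Fin d) → ℝ × EuclideanSpace ℝ (Fin d))
    {x y : EuclideanSpace ℝ (Fin d)} (hxy : x ≠ y) {M : ℝ} (hM0 : 0 < M)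
    (hres : M^2*‖x - y‖^2 = ‖(F x).2 - (F y).2‖^2
      + 2*M*|2*((F x).1 - (F y).1) + ⟪(F x).2 + (F y).2, y - x⟫|) :
    gamma1 F x y ≤ M := by
  have hpt : ∀ p : EuclideanSpace ℝ (Fin d),
      |eval1 F x p - eval1 F y p| / (‖x - p‖ ^ 2 + ‖y - p‖ ^ 2) ≤ M/2 := by
    intro p
    rw [div_le_iff₀ (denom_pos hxy p), delta_decomp F x y p, denom_decomp x y p]
    set q := p - (1/2 : ℝ) • (x + y) with hq
    set L := 2*((F x).1 - (F y).1) + ⟪(F x).2 + (F y).2, y - x⟫ with hL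
    set Nv := ‖(F x).2 - (F y).2‖ with hNv
    set Q := ‖q‖ with hQ
    set dd := ‖x - y‖ with hdd
    have habs : |L/2 + ⟪(F x).2 - (F y).2, q⟫| ≤ |L|/2 + Nv*Q := by
      refine (abs_add_le _ _).trans ?_
      have h1 : |L/2| = |L|/2 := by rw [abs_div]; norm_num
      have h2 := abs_real_inner_le_norm ((F x).2 - (F y).2) q
      linarith
    have key : 4*M*(M/2*(dd^2/2 + 2*Q^2) - (|L|/2 + Nv*Q)) = (2*M*Q - Nv)^2 := by
      linear_combination hres
    nlinarith [sq_nonneg (2*M*Q - Nv), habs, hM0]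
  have h := Real.iSup_le hpt (by linarith)
  unfold gamma1
  linarith

end ChaslesAux

set_option maxHeartbeats 1600000 in
/-- Chasles inequality for 1-fields: there is a point `c` in the closed ball
`B̄_{1/2}(x,y)`, depending only on `f`, such that every 1-field extension `F` of `f`
satisfies `Γ¹(F;x,y) ≤ max {Γ¹(F;x,a), Γ¹(F;a,y)}` for every `a` on the broken segment
`[x,c] ∪ [c,y]` other than `x,y`. -/
theorem one_field_chasles {d : ℕ}
    (x y : EuclideanSpace ℝ (Fin d)) (hxy : x ≠ y)
    (f : EuclideanSpace ℝ (Fin d) → ℝ × EuclideanSpace ℝ (Fin d)) :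
    ∃ c ∈ Metric.closedBall (midpoint ℝ x y) (‖x - y‖ / 2),
      ∀ F : EuclideanSpace ℝ (Fin d) → ℝ × EuclideanSpace ℝ (Fin d),
        F x = f x → F y = f y →
        ∀ a ∈ (segment ℝ x c ∪ segment ℝ c y) \ {x, y},
          gamma1 F x y ≤ max (gamma1 F x a) (gamma1 F a y) := by
  classical
  have hd : 0 < ‖x - y‖ := by rw [norm_pos_iff, sub_ne_zero]; exact hxy
  have hd2 : 0 < ‖x - y‖^2 := by positivity
  set A := Afun f x y with hA
  set B := ‖(f x).2 - (f y).2‖ / ‖x - y‖ with hB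
  have hAL : A * ‖x - y‖^2 = 2*((f x).1 - (f y).1) + ⟪(f x).2 + (f y).2, y - x⟫ := by
    rw [hA]; unfold Afun; field_simp
  have hB0 : 0 ≤ B := by rw [hB]; positivity
  have hsq : Real.sqrt (A^2 + B^2)^2 = A^2 + B^2 := Real.sq_sqrt (by positivity)
  set M := |A| + Real.sqrt (A^2 + B^2) with hM
  have hM2 : M^2 = B^2 + 2*M*|A| := by
    rw [hM]; nlinarith [hsq, sq_abs A]
  have hBM : B ≤ M := by
    have h1 : B ≤ Real.sqrt (A^2 + B^2) := by
      rw [show B = Real.sqrt (B^2) from (Real.sqrt_sq hB0).symm]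
      exact Real.sqrt_le_sqrt (by nlinarith [sq_nonneg A, Real.sqrt_sq hB0])
    have h2 := abs_nonneg A
    rw [hM]; linarith
  have hM0 : 0 ≤ M := by rw [hM]; positivity
  rcases eq_or_lt_of_le hM0 with hMz | hMpos
  · -- M = 0 : the two polynomials coincide
    refine ⟨midpoint ℝ x y, Metric.mem_closedBall_self (by positivity), ?_⟩
    intro F hFx hFy a ha
    have hAz : |A| = 0 := by
      have h1 : 0 ≤ Real.sqrt (A^2 + B^2) := Real.sqrt_nonneg _
      have h2 := abs_nonneg A
      rw [hM] at hMz; linarith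
    have hBz : B = 0 := by
      have h3 : Real.sqrt (A^2 + B^2) = 0 := by
        have h2 := abs_nonneg A
        rw [hM] at hMz; linarith [Real.sqrt_nonneg (A^2 + B^2)]
      nlinarith [hsq, abs_eq_zero.mp hAz]
    have huv : (f x).2 - (f y).2 = 0 := by
      rw [hB] at hBz
      field_simp at hBz
      rw [mul_zero, norm_eq_zero] at hBz
      exact hBz
    have hL0z : 2*((f x).1 - (f y).1) + ⟪(f x).2 + (f y).2, y - x⟫ = 0 := by
      rw [← hAL, abs_eq_zero.mp hAz, zero_mul]
    have hdiff : ∀ p, eval1 F x p - eval1 F y p = 0 := by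
      intro p
      rw [delta_decomp F x y p, hFx, hFy, hL0z, huv, inner_zero_left]
      norm_num
    have hg0 : gamma1 F x y = 0 := by
      unfold gamma1
      have he : (fun p : EuclideanSpace ℝ (Fin d) =>
          |eval1 F x p - eval1 F y p| / (‖x - p‖^2 + ‖y - p‖^2)) = fun _ => (0:ℝ) := by
        funext p; rw [hdiff p, abs_zero, zero_div]
      rw [he, ciSup_const, mul_zero]
    rw [hg0]
    exact le_max_of_le_left (gamma1_nonneg F x a)
  · -- M > 0
    set ε : ℝ := if 0 ≤ A then 1 else -1 with hε
    set c := midpoint ℝ x y + (ε/(2*M)) • ((f x).2 - (f y).2) with hc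
    have hmid : midpoint ℝ x y = (1/2 : ℝ) • (x + y) := by
      rw [midpoint_eq_smul_add]; norm_num
    have hcm : c - (1/2 : ℝ) • (x + y) = (ε/(2*M)) • ((f x).2 - (f y).2) := by
      rw [hc, hmid, add_sub_cancel_left]
    have hcball : c ∈ Metric.closedBall (midpoint ℝ x y) (‖x - y‖/2) := by
      rw [Metric.mem_closedBall, dist_eq_norm, hc, add_sub_cancel_left, norm_smul,
        Real.norm_eq_abs]
      have hε1 : |ε/(2*M)| = 1/(2*M) := by
        rw [hε]; split_ifs <;> rw [abs_div] <;>
          simp [abs_of_pos (by linarith : (0:ℝ) < 2*M)]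
      rw [hε1]
      have huvM : ‖(f x).2 - (f y).2‖ ≤ M * ‖x - y‖ := by
        have := hBM; rw [hB, div_le_iff₀ hd] at this; linarith
      rw [div_mul_eq_mul_div, div_le_div_iff₀ (by linarith) (by norm_num)]
      nlinarith [huvM]
    clear_value A B M ε c
    refine ⟨c, hcball, ?_⟩
    intro F hFx hFy a ha
    obtain ⟨haseg, hanot⟩ := ha
    have hax : a ≠ x := fun h => hanot (by simp [h])
    have hay : a ≠ y := fun h => hanot (by simp [h])
    by_contra hcon
    push_neg at hcon
    have hresM : M^2*‖x - y‖^2 = ‖(f x).2 - (f y).2‖^2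
        + 2*M*|2*((f x).1 - (f y).1) + ⟪(f x).2 + (f y).2, y - x⟫| := by
      have eB : B^2 * ‖x - y‖^2 = ‖(f x).2 - (f y).2‖^2 := by
        rw [hB]; field_simp
      have eA : |A| * ‖x - y‖^2
          = |2*((f x).1 - (f y).1) + ⟪(f x).2 + (f y).2, y - x⟫| := by
        rw [← hAL, abs_mul, abs_of_pos hd2]
      linear_combination ‖x - y‖^2 * hM2 + eB + 2*M*eA
    have hupper : gamma1 F x y ≤ M := by
      apply gamma1_upper F hxy hMpos
      rw [hFx, hFy]
      exact hresM
    have hγ1 : gamma1 F x a < M :=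
      lt_of_le_of_lt (le_max_left _ _) (lt_of_lt_of_le hcon hupper)
    have hγ2 : gamma1 F a y < M :=
      lt_of_le_of_lt (le_max_right _ _) (lt_of_lt_of_le hcon hupper)
    -- the four Dlem bounds
    have h1 := Dlem F (show x ≠ a from Ne.symm hax) hγ1
    have h2 := Dlem F (show a ≠ y from hay) hγ2
    have h1s := Dlem F (show y ≠ a from Ne.symm hay)
      (by rw [gamma1_comm F y a]; exact hγ2)
    have h2s := Dlem F (show a ≠ x from hax)
      (by rw [gamma1_comm F a x]; exact hγ1)
    rw [hFx] at h1 h2s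
    rw [hFy] at h2 h1s
    rcases haseg with hseg | hseg
    · -- a ∈ [x, c]
      rw [segment_eq_image'] at hseg
      obtain ⟨t, htI, hteq⟩ := hseg
      have ha' : a = x + t • (c - x) := hteq.symm
      have ht0 : 0 < t := lt_of_le_of_ne htI.1
        (fun h => hax (by rw [← hteq, ← h]; simp))
      by_cases hA0 : 0 ≤ A
      · have hεv : ε = 1 := by rw [hε, if_pos hA0]
        have hLnn : 0 ≤ 2*((f x).1 - (f y).1) + ⟪(f x).2 + (f y).2, y - x⟫ := by
          rw [← hAL]; exact mul_nonneg hA0 hd2.le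
        have hveq : (f y).2 = (f x).2 - (2*M) • (c - (1/2:ℝ) • (x + y)) := by
          rw [hcm, hεv, smul_smul, show (2*M)*((1:ℝ)/(2*M)) = 1 by field_simp [hMpos.ne']]
          module
        refine core1 x y c a (f x).2 (f y).2 (F a).2 (f x).1 (f y).1 (F a).1 M t
          hMpos ht0 htI.2 hveq ha' ?_ h1 h2
        rw [← abs_of_nonneg hLnn]
        exact hresM
      · have hεv : ε = -1 := by rw [hε, if_neg hA0]
        push_neg at hA0
        have hLneg : 2*((f x).1 - (f y).1) + ⟪(f x).2 + (f y).2, y - x⟫ ≤ 0 := by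
          rw [← hAL]; exact mul_nonpos_of_nonpos_of_nonneg hA0.le hd2.le
        have hveq : (f y).2 = (f x).2 + (2*M) • (c - (1/2:ℝ) • (x + y)) := by
          rw [hcm, hεv, smul_smul,
            show (2*M)*((-1:ℝ)/(2*M)) = -1 by field_simp [hMpos.ne']]
          module
        refine core1' x y c a (f x).2 (f y).2 (F a).2 (f x).1 (f y).1 (F a).1 M t
          hMpos ht0 htI.2 hveq ha' ?_ h1 h2
        rw [show |2*((f x).1 - (f y).1) + ⟪(f x).2 + (f y).2, y - x⟫|
            = -(2*((f x).1 - (f y).1) + ⟪(f x).2 + (f y).2, y - x⟫) from abs_of_nonpos hLneg]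
          at hresM
        linear_combination hresM
    · -- a ∈ [c, y]
      rw [segment_symm, segment_eq_image'] at hseg
      obtain ⟨t, htI, hteq⟩ := hseg
      have ha' : a = y + t • (c - y) := hteq.symm
      have ht0 : 0 < t := lt_of_le_of_ne htI.1
        (fun h => hay (by rw [← hteq, ← h]; simp))
      have hswapnorm : ‖y - x‖ = ‖x - y‖ := norm_sub_rev y x
      have hswapnorm2 : ‖(f y).2 - (f x).2‖ = ‖(f x).2 - (f y).2‖ := norm_sub_rev _ _
      have hswapL : 2*((f y).1 - (f x).1) + ⟪(f y).2 + (f x).2, x - y⟫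
          = -(2*((f x).1 - (f y).1) + ⟪(f x).2 + (f y).2, y - x⟫) := by
        rw [show x - y = -(y - x) by module, inner_neg_right,
          show (f y).2 + (f x).2 = (f x).2 + (f y).2 by module]
        ring
      by_cases hA0 : 0 ≤ A
      · have hεv : ε = 1 := by rw [hε, if_pos hA0]
        have hLnn : 0 ≤ 2*((f x).1 - (f y).1) + ⟪(f x).2 + (f y).2, y - x⟫ := by
          rw [← hAL]; exact mul_nonneg hA0 hd2.le
        have hveq : (f x).2 = (f y).2 + (2*M) • (c - (1/2:ℝ) • (y + x)) := by
          rw [show (1/2:ℝ) • (y + x) = (1/2:ℝ) • (x + y) by module, hcm, hεv, smul_smul,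
            show (2*M)*((1:ℝ)/(2*M)) = 1 by field_simp [hMpos.ne']]
          module
        refine core1' y x c a (f y).2 (f x).2 (F a).2 (f y).1 (f x).1 (F a).1 M t
          hMpos ht0 htI.2 hveq ha' ?_ h1s h2s
        rw [abs_of_nonneg hLnn] at hresM
        rw [hswapnorm, hswapnorm2, hswapL]
        linear_combination hresM
      · have hεv : ε = -1 := by rw [hε, if_neg hA0]
        push_neg at hA0
        have hLneg : 2*((f x).1 - (f y).1) + ⟪(f x).2 + (f y).2, y - x⟫ ≤ 0 := by
          rw [← hAL]; exact mul_nonpos_of_nonpos_of_nonneg hA0.le hd2.le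
        have hveq : (f x).2 = (f y).2 - (2*M) • (c - (1/2:ℝ) • (y + x)) := by
          rw [show (1/2:ℝ) • (y + x) = (1/2:ℝ) • (x + y) by module, hcm, hεv, smul_smul,
            show (2*M)*((-1:ℝ)/(2*M)) = -1 by field_simp [hMpos.ne']]
          module
        refine core1 y x c a (f y).2 (f x).2 (F a).2 (f y).1 (f x).1 (F a).1 M t
          hMpos ht0 htI.2 hveq ha' ?_ h1s h2s
        rw [show |2*((f x).1 - (f y).1) + ⟪(f x).2 + (f y).2, y - x⟫|
            = -(2*((f x).1 - (f y).1) + ⟪(f x).2 + (f y).2, y - x⟫) from abs_of_nonpos hLneg]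
          at hresM
        rw [hswapnorm, hswapnorm2, hswapL]
        linear_combination hresM
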